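/- Let n, k, r', l be positive integers and ε ∈ (0,1) with r' ≤ n/6 and l > max{21·log(n/ε) + 3·log(k/ε) + 6, 2r'}. Consider n − r' + 1 columns, where for each column c the set of its nonzero rows is the image of l independent draws, each uniformly distributed over {1,…,n}, with all draws independent across columns. Then with probability at least 1 − ε/k, for every nonempty proper subset T of these n − r' + 1 columns, the number of rows of {1,…,n} that are nonzero in at least one column of T is at least |T| + r'. -/

import Mathlib

/-!
Union bound. If a nonempty proper family `T` of `t` columns meets fewer than `t + r'` rows, then
all `l t` draws of `T` land in some set `S` of `s = t + r' - 1` rows, an event of probability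
`(s / n) ^ (l t)`. Summing over `t`, `T` and `S`, it suffices that each of the `n - r'` terms
`C(n - r' + 1, t) C(n, s) (s / n) ^ (l t)` is at most `ε² / (n k) = exp (-(log (n/ε) + log (k/ε)))`.
With `C(n, s) (s / n) ^ s ≤ e ^ s` this is checked in three regimes: `t = 1`, where `s / n ≤ 1 / 6`;
`t ≥ 2` and `2 s ≤ n`, where `s / n ≤ 1 / 2`; and `2 s > n`, where `t ≥ n / 3`, both binomial
coefficients are at most `n ^ (n - s)` and `(s / n) ^ (l t) ≤ exp (-(n - s) l t / n)`.
-/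

open Real Finset

theorem Nat.choose_mul_div_pow_le_exp (n s : ℕ) : (n.choose s : ℝ) * (s / n) ^ s ≤ exp s := by
  rcases n.eq_zero_or_pos with rfl | hn
  · cases s <;> simp [(exp_pos _).le]
  calc (n.choose s : ℝ) * (s / n) ^ s ≤ (n : ℝ) ^ s / s.factorial * (s / n) ^ s := by
        gcongr; exact Nat.choose_le_pow_div s n
    _ = (s : ℝ) ^ s / s.factorial := by rw [div_pow]; field_simp
    _ ≤ exp s := pow_div_factorial_le_exp _ s.cast_nonneg s

theorem Real.five_thirds_lt_log_six : 5 / 3 < log 6 := by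
  have h3 : 1 < log 3 := by
    rw [lt_log_iff_exp_lt (by norm_num)]
    linarith [exp_one_lt_d9]
  rw [show (6 : ℝ) = 2 * 3 by norm_num, log_mul (by norm_num) (by norm_num)]
  linarith [log_two_gt_d9]

theorem Real.natCast_le_exp_of_log_le {n : ℕ} {a : ℝ} (h : log n ≤ a) : (n : ℝ) ≤ exp a :=
  (le_exp_log _).trans (exp_le_exp.2 h)

section TermBounds

variable {n m r l t s : ℕ} {a b : ℝ}

theorem choose_one_mul_choose_mul_pow_le (hm : m ≤ n) (hr : 6 * r ≤ n) (hrl : 2 * r < l)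
    (ha : log n ≤ a) (hl : 21 * a + 3 * b + 6 < l) :
    (m.choose 1 : ℝ) * n.choose r * ((r : ℝ) / n) ^ l ≤ exp (-(a + b)) := by
  have ha0 : 0 ≤ a := (log_natCast_nonneg n).trans ha
  have hm' : (m : ℝ) ≤ exp a :=
    (Nat.cast_le.2 hm).trans (natCast_le_exp_of_log_le ha)
  have hq0 : 0 ≤ (r : ℝ) / n := by positivity
  have hq : (r : ℝ) / n ≤ exp (-(5 / 3)) := by
    calc (r : ℝ) / n ≤ 1 / 6 := by
          rcases n.eq_zero_or_pos with rfl | hn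
          · simp
          rw [div_le_div_iff₀ (by positivity) (by norm_num)]
          exact_mod_cast (by omega : r * 6 ≤ 1 * n)
      _ ≤ exp (-(5 / 3)) := by
          rw [exp_neg, one_div]
          gcongr
          exact (lt_log_iff_exp_lt (by norm_num)).1 five_thirds_lt_log_six |>.le
  have hsplit : ((r : ℝ) / n) ^ l = ((r : ℝ) / n) ^ r * ((r : ℝ) / n) ^ (l - r) := by
    rw [← pow_add, Nat.add_sub_cancel' (by omega)]
  have htail : ((r : ℝ) / n) ^ (l - r) ≤ exp (-(5 / 3) * (l - r : ℕ)) := by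
    rw [mul_comm, exp_nat_mul]
    exact pow_le_pow_left₀ hq0 hq _
  have hlr : ((l - r : ℕ) : ℝ) = l - r := by push_cast [Nat.cast_sub (by omega : r ≤ l)]; ring
  have hrl' : 2 * (r : ℝ) + 1 ≤ l := by exact_mod_cast hrl
  calc (m.choose 1 : ℝ) * n.choose r * ((r : ℝ) / n) ^ l
      = m * (n.choose r * ((r : ℝ) / n) ^ r) * ((r : ℝ) / n) ^ (l - r) := by
        rw [hsplit, Nat.choose_one_right]; ring
    _ ≤ exp a * exp r * exp (-(5 / 3) * (l - r : ℕ)) := by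
        gcongr
        exact Nat.choose_mul_div_pow_le_exp n r
    _ = exp (a + r - 5 / 3 * (l - r : ℕ)) := by rw [← exp_add, ← exp_add]; ring_nf
    _ ≤ exp (-(a + b)) := by
        rw [hlr]
        gcongr
        linarith

theorem choose_mul_choose_mul_pow_le_of_two_mul_le (hm : m ≤ n) (ht : 2 ≤ t) (hs : 2 * s ≤ n)
    (hsl : 2 * s ≤ 2 * t + l) (ha : log n ≤ a) (ha1 : 1 ≤ a) (hb : 0 ≤ b)
    (hl : 21 * a + 3 * b + 6 < l) :
    (m.choose t : ℝ) * n.choose s * ((s : ℝ) / n) ^ (l * t) ≤ exp (-(a + b)) := by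
  have hl7 : 7 ≤ l := by
    have : (6 : ℝ) < l := by linarith
    exact_mod_cast this
  have hslt : s ≤ l * t := by nlinarith
  have hmt : (m.choose t : ℝ) ≤ exp (t * a) := by
    rw [exp_nat_mul]
    calc (m.choose t : ℝ) ≤ (m : ℝ) ^ t := by exact_mod_cast Nat.choose_le_pow m t
      _ ≤ exp a ^ t := by
        gcongr; exact (Nat.cast_le.2 hm).trans (natCast_le_exp_of_log_le ha)
  have hq0 : 0 ≤ (s : ℝ) / n := by positivity
  have hq : (s : ℝ) / n ≤ exp (-log 2) := by
    rw [exp_neg, exp_log two_pos]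
    rcases n.eq_zero_or_pos with rfl | hn
    · simp
    rw [div_le_iff₀ (by positivity)]
    have : (2 * s : ℝ) ≤ n := by exact_mod_cast hs
    linarith
  have hsplit : ((s : ℝ) / n) ^ (l * t) = ((s : ℝ) / n) ^ s * ((s : ℝ) / n) ^ (l * t - s) := by
    rw [← pow_add, Nat.add_sub_cancel' hslt]
  have htail : ((s : ℝ) / n) ^ (l * t - s) ≤ exp (-log 2 * (l * t - s : ℕ)) := by
    rw [mul_comm (-log 2), exp_nat_mul]
    exact pow_le_pow_left₀ hq0 hq _
  have hcast : ((l * t - s : ℕ) : ℝ) = l * t - s := by push_cast [Nat.cast_sub hslt]; ring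
  have hexp : t * a + s - log 2 * (l * t - s) ≤ -(a + b) := by
    have hlog2 := log_two_gt_d9
    have ht' : (2 : ℝ) ≤ t := by exact_mod_cast ht
    have hsl' : 2 * (s : ℝ) ≤ 2 * t + l := by exact_mod_cast hsl
    -- the coefficient of `t` is negative, so `t = 2` is the worst case
    have hK : (t - 2) * (1 + log 2 + a - l * log 2) ≤ 0 :=
      mul_nonpos_of_nonneg_of_nonpos (by linarith) (by nlinarith)
    nlinarith
  calc (m.choose t : ℝ) * n.choose s * ((s : ℝ) / n) ^ (l * t)
      = m.choose t * (n.choose s * ((s : ℝ) / n) ^ s) * ((s : ℝ) / n) ^ (l * t - s) := by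
        rw [hsplit]; ring
    _ ≤ exp (t * a) * exp s * exp (-log 2 * (l * t - s : ℕ)) := by
        gcongr
        exact Nat.choose_mul_div_pow_le_exp n s
    _ = exp (t * a + s - log 2 * (l * t - s)) := by
        rw [← exp_add, ← exp_add, hcast]; ring_nf
    _ ≤ exp (-(a + b)) := exp_le_exp.2 hexp

theorem choose_mul_choose_mul_pow_le_of_three_mul_ge {D : ℕ} (hmt : m = t + D) (hns : n = s + D)
    (hm : m ≤ n) (hD : 1 ≤ D) (ht : n ≤ 3 * t) (ha : log n ≤ a) (hb : 0 ≤ b)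
    (hl : 21 * a + 3 * b + 6 < l) :
    (m.choose t : ℝ) * n.choose s * ((s : ℝ) / n) ^ (l * t) ≤ exp (-(a + b)) := by
  have ha0 : 0 ≤ a := (log_natCast_nonneg n).trans ha
  have hn : (0 : ℝ) < n := by exact_mod_cast (by omega : 0 < n)
  have hnD : (n : ℝ) ^ D ≤ exp (D * a) := by
    rw [exp_nat_mul]; gcongr; exact natCast_le_exp_of_log_le ha
  have hC1 : (m.choose t : ℝ) ≤ exp (D * a) := by
    rw [hmt, Nat.choose_symm_add, ← hmt]
    refine le_trans ?_ hnD
    exact_mod_cast (Nat.choose_le_pow m D).trans (Nat.pow_le_pow_left hm D)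
  have hC2 : (n.choose s : ℝ) ≤ exp (D * a) := by
    rw [hns, Nat.choose_symm_add, ← hns]
    exact le_trans (by exact_mod_cast Nat.choose_le_pow n D) hnD
  have hq : (s : ℝ) / n ≤ exp (-(D / n)) := by
    refine le_trans (le_of_eq ?_) (one_sub_le_exp_neg _)
    rw [hns]; push_cast; field_simp; ring
  have hpow : ((s : ℝ) / n) ^ (l * t) ≤ exp (-(D * l / 3)) := by
    calc ((s : ℝ) / n) ^ (l * t) ≤ exp (-(D / n)) ^ (l * t) := by gcongr
      _ = exp (-(D * l * (t / n))) := by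
        rw [← exp_nat_mul]; push_cast; field_simp
      _ ≤ exp (-(D * l / 3)) := by
        have h3 : 1 / 3 ≤ (t : ℝ) / n := by
          rw [div_le_div_iff₀ (by norm_num) hn]
          exact_mod_cast (by omega : 1 * n ≤ t * 3)
        have := mul_le_mul_of_nonneg_left h3 (by positivity : (0 : ℝ) ≤ D * l)
        gcongr
        linarith
  have hD' : (1 : ℝ) ≤ D := by exact_mod_cast hD
  have hexp : D * a + D * a - D * l / 3 ≤ -(a + b) := by
    have hD1 : (D - 1) * (2 * a - l / 3) ≤ 0 :=
      mul_nonpos_of_nonneg_of_nonpos (by linarith) (by linarith)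
    nlinarith
  calc (m.choose t : ℝ) * n.choose s * ((s : ℝ) / n) ^ (l * t)
      ≤ exp (D * a) * exp (D * a) * exp (-(D * l / 3)) := by gcongr
    _ = exp (D * a + D * a - D * l / 3) := by rw [← exp_add, ← exp_add]; ring_nf
    _ ≤ exp (-(a + b)) := exp_le_exp.2 hexp

theorem choose_mul_choose_mul_pow_le (hmr : m + r = n + 1) (hst : s + 1 = t + r) (ht : 1 ≤ t)
    (htm : t < m) (hr0 : 0 < r) (hr : 6 * r ≤ n) (hrl : 2 * r < l) (ha : log n ≤ a) (hb : 0 ≤ b)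
    (hl : 21 * a + 3 * b + 6 < l) :
    (m.choose t : ℝ) * n.choose s * ((s : ℝ) / n) ^ (l * t) ≤ exp (-(a + b)) := by
  have hm : m ≤ n := by omega
  rcases lt_or_ge n (2 * s) with hs | hs
  · exact choose_mul_choose_mul_pow_le_of_three_mul_ge (D := n - s) (by omega) (by omega) hm
      (by omega) (by omega) ha hb hl
  obtain rfl | ht2 := ht.eq_or_lt
  · obtain rfl : s = r := by omega
    simpa using choose_one_mul_choose_mul_pow_le hm hr hrl ha hl
  have ha1 : 1 ≤ a := by
    have h6 : log 6 ≤ log n := log_le_log (by norm_num) (by exact_mod_cast (by omega : 6 ≤ n))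
    linarith [five_thirds_lt_log_six]
  exact choose_mul_choose_mul_pow_le_of_two_mul_le hm ht2 hs (by omega) ha ha1 hb hl

end TermBounds

section Counting

variable {ι κ α : Type*} [Fintype ι] [Fintype κ] [Fintype α]
  [DecidableEq ι] [DecidableEq κ] [DecidableEq α]

theorem card_filter_forall_mem_div_card [Nonempty α] (T : Finset ι) (S : Finset α) :
    (#{ω : ι → κ → α | ∀ c ∈ T, ∀ i, ω c i ∈ S} : ℝ) / Fintype.card (ι → κ → α) =
      ((#S : ℝ) / Fintype.card α) ^ (Fintype.card κ * #T) := by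
  have hfilter : ({ω : ι → κ → α | ∀ c ∈ T, ∀ i, ω c i ∈ S} : Finset _) =
      Fintype.piFinset fun c => Fintype.piFinset fun _ : κ => if c ∈ T then S else univ := by
    ext ω
    simp only [mem_filter, mem_univ, true_and, Fintype.mem_piFinset]
    refine ⟨fun h c i => ?_, fun h c hc i => by simpa [hc] using h c i⟩
    split_ifs with hc
    · exact h c hc i
    · exact mem_univ _
  have hα : (Fintype.card α : ℝ) ≠ 0 := by exact_mod_cast Fintype.card_ne_zero
  rw [hfilter, Fintype.card_piFinset, Fintype.card_pi, Nat.cast_prod, Nat.cast_prod,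
    ← prod_div_distrib]
  simp only [Fintype.card_piFinset, prod_const, card_univ, Fintype.card_pi, Nat.cast_pow,
    apply_ite card, apply_ite (fun x : ℕ => (x : ℝ) ^ Fintype.card κ), ite_div,
    div_self (pow_ne_zero _ hα)]
  rw [prod_ite_mem, univ_inter, prod_const, ← div_pow, ← pow_mul]

theorem card_filter_exists_card_biUnion_lt_div_card_le [Nonempty α] (r : ℕ)
    (hr : Fintype.card ι + r ≤ Fintype.card α + 1) :
    (#{ω : ι → κ → α | ∃ T : Finset ι, T.Nonempty ∧ T ≠ univ ∧
        #(T.biUnion fun c => univ.image (ω c)) < #T + r} : ℝ) / Fintype.card (ι → κ → α) ≤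
      ∑ t ∈ Icc 1 (Fintype.card ι - 1), ((Fintype.card ι).choose t : ℝ) *
        (Fintype.card α).choose (t + r - 1) *
        (((t + r - 1 : ℕ) : ℝ) / Fintype.card α) ^ (Fintype.card κ * t) := by
  set E : Finset ι → Finset α → Finset (ι → κ → α) :=
    fun T S => {ω | ∀ c ∈ T, ∀ i, ω c i ∈ S}
  have hcover : ({ω : ι → κ → α | ∃ T : Finset ι, T.Nonempty ∧ T ≠ univ ∧
      #(T.biUnion fun c => univ.image (ω c)) < #T + r} : Finset _) ⊆
      (Icc 1 (Fintype.card ι - 1)).biUnion fun t => (powersetCard t univ).biUnion fun T =>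
        (powersetCard (t + r - 1) univ).biUnion fun S => E T S := by
    intro ω hω
    obtain ⟨T, hTne, hTuniv, hT⟩ := (mem_filter.1 hω).2
    have hTcard : #T < Fintype.card ι := (card_lt_iff_ne_univ T).2 hTuniv
    obtain ⟨S, hTS, -, hS⟩ := exists_subsuperset_card_eq (subset_univ _)
      (by omega : #(T.biUnion fun c => univ.image (ω c)) ≤ #T + r - 1)
      (by rw [card_univ]; omega)
    simp only [mem_biUnion, mem_Icc, mem_powersetCard_univ]
    refine ⟨#T, ⟨hTne.card_pos, by omega⟩, T, rfl, S, hS, ?_⟩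
    simp only [E, mem_filter, mem_univ, true_and]
    exact fun c hc i => hTS (mem_biUnion.2 ⟨c, hc, mem_image_of_mem _ (mem_univ i)⟩)
  calc _ ≤ (∑ t ∈ Icc 1 (Fintype.card ι - 1), ∑ T ∈ powersetCard t univ,
          ∑ S ∈ powersetCard (t + r - 1) univ, (#(E T S) : ℝ)) / Fintype.card (ι → κ → α) := by
        gcongr
        exact_mod_cast (card_le_card hcover).trans <| card_biUnion_le.trans <|
          sum_le_sum fun t _ => card_biUnion_le.trans <| sum_le_sum fun T _ => card_biUnion_le
    _ = ∑ t ∈ Icc 1 (Fintype.card ι - 1), ∑ T ∈ powersetCard t (univ : Finset ι),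
          ∑ S ∈ powersetCard (t + r - 1) (univ : Finset α),
            (((t + r - 1 : ℕ) : ℝ) / Fintype.card α) ^ (Fintype.card κ * t) := by
        simp only [sum_div]
        refine sum_congr rfl fun t _ => sum_congr rfl fun T hT => sum_congr rfl fun S hS => ?_
        rw [card_filter_forall_mem_div_card, mem_powersetCard_univ.1 hT,
          mem_powersetCard_univ.1 hS]
    _ = _ := by simp [card_powersetCard, mul_assoc]

end Counting

theorem Fintype.card_subtype_div_card_eq_one_sub {β : Type*} [Fintype β] [Nonempty β]
    (p : β → Prop) [DecidablePred p] :
    (Nat.card {x // p x} : ℝ) / Fintype.card β = 1 - (#{x | ¬p x} : ℝ) / Fintype.card β := by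
  have hsplit := card_filter_add_card_filter_not (s := (univ : Finset β)) p
  rw [card_univ] at hsplit
  have hβ : (Fintype.card β : ℝ) ≠ 0 := by exact_mod_cast Fintype.card_ne_zero
  rw [Nat.card_eq_fintype_card, Fintype.card_subtype, eq_sub_iff_add_eq, ← add_div,
    div_eq_one_iff_eq hβ]
  exact_mod_cast hsplit

theorem stmt12_general (n k r' l : ℕ) (hk : 0 < k) (hr'0 : 0 < r')
    (ε : ℝ) (hε0 : 0 < ε) (hε1 : ε < 1)
    (hr'n : (r' : ℝ) ≤ (n : ℝ) / 6)
    (hlb : (l : ℝ) > max (21 * Real.log (n / ε) + 3 * Real.log (k / ε) + 6) (2 * r')) :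
    1 - ε / k ≤
      (Nat.card {ω : Fin (n - r' + 1) → Fin l → Fin n //
          ∀ T : Finset (Fin (n - r' + 1)), T.Nonempty → T ≠ Finset.univ →
            T.card + r' ≤ (T.biUnion (fun c => Finset.univ.image (ω c))).card} : ℝ) /
        (Fintype.card (Fin (n - r' + 1) → Fin l → Fin n) : ℝ) := by
  have h6r : 6 * r' ≤ n := by exact_mod_cast (by linarith : (6 * r' : ℝ) ≤ n)
  have hrl : 2 * r' < l := by exact_mod_cast (le_max_right _ _).trans_lt hlb
  have hn : (0 : ℝ) < n := by exact_mod_cast (by omega : 0 < n)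
  have ha : log n ≤ log (n / ε) := log_le_log hn (le_div_self hn.le hε0 hε1.le)
  have hb : 0 ≤ log (k / ε) :=
    log_nonneg ((one_le_div hε0).2 (hε1.le.trans (by exact_mod_cast hk)))
  have hl := (le_max_left _ _).trans_lt hlb
  have : Nonempty (Fin n) := ⟨⟨0, by omega⟩⟩
  have hbad := card_filter_exists_card_biUnion_lt_div_card_le (ι := Fin (n - r' + 1))
    (κ := Fin l) (α := Fin n) r' (by simp only [Fintype.card_fin]; omega)
  simp only [Fintype.card_fin] at hbad
  have hsum : ∑ t ∈ Icc 1 (n - r' + 1 - 1), ((n - r' + 1).choose t : ℝ) * n.choose (t + r' - 1) *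
      (((t + r' - 1 : ℕ) : ℝ) / n) ^ (l * t) ≤ ε / k := by
    calc _ ≤ ∑ t ∈ Icc 1 (n - r' + 1 - 1), exp (-(log (n / ε) + log (k / ε))) :=
          sum_le_sum fun t ht => choose_mul_choose_mul_pow_le (by omega) (by omega)
            (mem_Icc.1 ht).1 (by have := (mem_Icc.1 ht).2; omega) hr'0 h6r hrl ha hb hl
      _ ≤ n * exp (-(log (n / ε) + log (k / ε))) := by
          rw [sum_const, Nat.card_Icc, nsmul_eq_mul]
          gcongr
          exact_mod_cast (by omega : n - r' + 1 - 1 + 1 - 1 ≤ n)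
      _ = ε * (ε / k) := by
          rw [exp_neg, exp_add, exp_log (by positivity), exp_log (by positivity)]
          field_simp
      _ ≤ ε / k := mul_le_of_le_one_left (by positivity) hε1.le
  rw [Fintype.card_subtype_div_card_eq_one_sub]
  simp only [not_forall, not_le, exists_prop]
  linarith

/-- Lemma 16: consider `n − r' + 1` columns, where the set of nonzero rows of column `c`
is the image of `l` i.i.d. draws uniform on `{1,…,n}`, independently across columns
(modelled by the uniform counting probability on `Fin (n-r'+1) → Fin l → Fin n`).
If `r' ≤ n/6` and `l > max{21 log(n/ε) + 3 log(k/ε) + 6, 2r'}`, then with probability at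
least `1 − ε/k` every nonempty proper subfamily `T` of columns has at least `|T| + r'`
distinct nonzero rows. -/
theorem stmt12 (n k r' l : ℕ) (hn : 0 < n) (hk : 0 < k) (hr'0 : 0 < r') (hl0 : 0 < l)
    (ε : ℝ) (hε0 : 0 < ε) (hε1 : ε < 1)
    (hr'n : (r' : ℝ) ≤ (n : ℝ) / 6)
    (hlb : (l : ℝ) > max (21 * Real.log (n / ε) + 3 * Real.log (k / ε) + 6) (2 * r')) :
    1 - ε / k ≤
      (Nat.card {ω : Fin (n - r' + 1) → Fin l → Fin n //
          ∀ T : Finset (Fin (n - r' + 1)), T.Nonempty → T ≠ Finset.univ →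
            T.card + r' ≤ (T.biUnion (fun c => Finset.univ.image (ω c))).card} : ℝ) /
        (Fintype.card (Fin (n - r' + 1) → Fin l → Fin n) : ℝ) :=
  stmt12_general n k r' l hk hr'0 ε hε0 hε1 hr'n hlb
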